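/- arXiv:1912.05443 — 3 statements merged into one kernel-verified Lean document; each statement's English description precedes it below -/
import Mathlib

section
/- Let D_0, D_1, D_2, D_3 be integers with D_0 + D_1 + D_2 + D_3 = 0. Then there exists an index i ∈ Z/4 such that D_i ≤ 0, D_{i+1} ≥ 0, and D_{i+1} + D_{i+2} ≥ 0 (indices mod 4). -/
/-! Suppose no index works. Since the `D i` sum to zero, some `i` has `D i ≤ 0 ≤ D (i + 1)`;
failure at `i` forces `D (i + 2) < -D (i + 1)`, and then failure at `i + 2` (or `D (i + 3) < 0`)
forces `D (i + 3) < -D i`, so the total sum is negative. -/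

/-- core of Lemma 7: if integers `D₀, D₁, D₂, D₃` sum to zero, then there
is `i ∈ ℤ/4` with `Dᵢ ≤ 0`, `D_(i+1) ≥ 0` and `D_(i+1) + D_(i+2) ≥ 0` (indices mod 4). -/
theorem ring_balance (D : ZMod 4 → ℤ) (h : D 0 + D 1 + D 2 + D 3 = 0) :
    ∃ i : ZMod 4, D i ≤ 0 ∧ 0 ≤ D (i + 1) ∧ 0 ≤ D (i + 1) + D (i + 2) := by
  by_contra! hD
  have h0 := hD 0
  have h1 := hD 1
  have h2 := hD 2
  have h3 := hD 3
  reduce_mod_char at h0 h1 h2 h3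
  omega
end

section
/- Every vertex of BH_{n-1}^i (the subcube of BH_n with (n-1)-th coordinate equal to i) has exactly two neighbors outside BH_{n-1}^i: if its inner index is even, both lie in BH_{n-1}^{i+1}; if its inner index is odd, both lie in BH_{n-1}^{i-1} (indices mod 4). -/
/-!
An edge leaving `BH_{n-1}^i` changes the last coordinate, an outer one, so it is an edge of the
second kind along that coordinate. Read from `u`'s side in either direction, it moves the inner
index by `±1` and the last coordinate by `(-1)^{a₀}`, where `a₀` is the inner index of `u`:
read backwards, the parity of the inner index, and with it the sign, flips. So the crossing
neighbours are exactly the two vertices given by the choice of `±1`.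
-/

/-- The neighbor rule of the balanced hypercube `BH n`: `v` is a neighbor of `u`
if `v` is obtained from `u` by changing the inner index `a₀` to `a₀ ± 1 (mod 4)`,
possibly also changing one outer coordinate `aᵢ` (`i ≠ 0`) to `aᵢ + (-1)^{a₀} (mod 4)`. -/
def bhRule (n : ℕ) (u v : Fin n → ZMod 4) : Prop :=
  ∃ hn : 0 < n,
    (v ⟨0, hn⟩ = u ⟨0, hn⟩ + 1 ∨ v ⟨0, hn⟩ = u ⟨0, hn⟩ - 1) ∧
    ((∀ i, i ≠ ⟨0, hn⟩ → v i = u i) ∨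
      ∃ i, i ≠ ⟨0, hn⟩ ∧
        v i = u i + (if (u ⟨0, hn⟩).val % 2 = 0 then 1 else -1) ∧
        ∀ j, j ≠ ⟨0, hn⟩ → j ≠ i → v j = u j)

/-- The balanced hypercube `BH n`, as a simple graph on `(ZMod 4)^n`. -/
def BH (n : ℕ) : SimpleGraph (Fin n → ZMod 4) where
  Adj u v := u ≠ v ∧ (bhRule n u v ∨ bhRule n v u)
  symm := ⟨fun u v h => ⟨h.1.symm, h.2.symm⟩⟩
  loopless := ⟨fun u h => h.1 rfl⟩

/-- `(-1)^a` in `ZMod 4`. -/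
def bhSign (a : ZMod 4) : ZMod 4 := if a.val % 2 = 0 then 1 else -1

lemma bhSign_of_even {a : ZMod 4} (h : a.val % 2 = 0) : bhSign a = 1 := if_pos h

lemma bhSign_of_odd {a : ZMod 4} (h : a.val % 2 = 1) : bhSign a = -1 := if_neg (by omega)

lemma bhSign_of_step {a b : ZMod 4} (h : b = a + 1 ∨ b = a - 1) : bhSign b = -bhSign a := by
  unfold bhSign; revert a b; decide

lemma add_bhSign_ne (x a : ZMod 4) : x + bhSign a ≠ x := by
  unfold bhSign; revert x a; decide

lemma ZMod4.add_one_ne_sub_one (x : ZMod 4) : x + 1 ≠ x - 1 := by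
  revert x; decide

lemma ZMod4.ne_of_step {a b : ZMod 4} (h : b = a + 1 ∨ b = a - 1) : b ≠ a := by
  revert a b; decide

lemma add_one_or_sub_one_symm {R : Type*} [AddGroupWithOne R] {a b : R}
    (h : b = a + 1 ∨ b = a - 1) : a = b + 1 ∨ a = b - 1 := by
  rcases h with rfl | rfl
  · exact Or.inr (add_sub_cancel_right a 1).symm
  · exact Or.inl (sub_add_cancel a 1).symm

section crossStep

variable {n : ℕ} (hn : 0 < n)

def crossStep (u : Fin n → ZMod 4) (j : Fin n) (a : ZMod 4) : Fin n → ZMod 4 :=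
  Function.update (Function.update u ⟨0, hn⟩ a) j (u j + bhSign (u ⟨0, hn⟩))

variable {hn} {u v : Fin n → ZMod 4} {j : Fin n}

lemma crossStep_apply_inner (hj : j ≠ ⟨0, hn⟩) (a : ZMod 4) :
    crossStep hn u j a ⟨0, hn⟩ = a := by
  rw [crossStep, Function.update_of_ne hj.symm, Function.update_self]

lemma crossStep_apply_self (a : ZMod 4) : crossStep hn u j a j = u j + bhSign (u ⟨0, hn⟩) :=
  Function.update_self ..

lemma crossStep_apply_of_ne {k : Fin n} (hk0 : k ≠ ⟨0, hn⟩) (hkj : k ≠ j) (a : ZMod 4) :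
    crossStep hn u j a k = u k := by
  rw [crossStep, Function.update_of_ne hkj, Function.update_of_ne hk0]

lemma eq_crossStep_iff (hj : j ≠ ⟨0, hn⟩) (a : ZMod 4) :
    v = crossStep hn u j a ↔ v ⟨0, hn⟩ = a ∧ v j = u j + bhSign (u ⟨0, hn⟩) ∧
      ∀ k, k ≠ ⟨0, hn⟩ → k ≠ j → v k = u k := by
  constructor
  · rintro rfl
    exact ⟨crossStep_apply_inner hj a, crossStep_apply_self a,
      fun k hk0 hkj => crossStep_apply_of_ne hk0 hkj a⟩
  · rintro ⟨h0, hj', hother⟩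
    funext k
    by_cases hkj : k = j
    · rw [hkj, hj', crossStep_apply_self]
    by_cases hk0 : k = ⟨0, hn⟩
    · rw [hk0, h0, crossStep_apply_inner hj]
    · rw [hother k hk0 hkj, crossStep_apply_of_ne hk0 hkj]

lemma bhRule.eq_crossStep (h : bhRule n u v) (hj : j ≠ ⟨0, hn⟩) (hv : v j ≠ u j) :
    v = crossStep hn u j (v ⟨0, hn⟩) := by
  obtain ⟨_, -, hall | ⟨k, -, hkv, hother⟩⟩ := h
  · exact absurd (hall j hj) hv
  obtain rfl : k = j := by_contra fun hkj => hv (hother j hj (Ne.symm hkj))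
  exact (eq_crossStep_iff hj _).2 ⟨rfl, hkv, hother⟩

/-- An edge read backwards: the sign flips with the parity of the inner index. -/
lemma eq_crossStep_of_eq_crossStep (hj : j ≠ ⟨0, hn⟩)
    (hstep : u ⟨0, hn⟩ = v ⟨0, hn⟩ + 1 ∨ u ⟨0, hn⟩ = v ⟨0, hn⟩ - 1)
    (hu : u = crossStep hn v j (u ⟨0, hn⟩)) :
    v = crossStep hn u j (v ⟨0, hn⟩) := by
  obtain ⟨-, huj, hother⟩ := (eq_crossStep_iff hj _).1 hu
  refine (eq_crossStep_iff hj _).2 ⟨rfl, ?_, fun k hk0 hkj => (hother k hk0 hkj).symm⟩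
  rw [huj, bhSign_of_step hstep, add_neg_cancel_right]

lemma BH.eq_crossStep_of_adj (h : (BH n).Adj u v) (hj : j ≠ ⟨0, hn⟩) (hv : v j ≠ u j) :
    v = crossStep hn u j (v ⟨0, hn⟩) ∧
      (v ⟨0, hn⟩ = u ⟨0, hn⟩ + 1 ∨ v ⟨0, hn⟩ = u ⟨0, hn⟩ - 1) := by
  rcases h.2 with huv | hvu
  · exact ⟨huv.eq_crossStep hj hv, huv.2.1⟩
  · exact ⟨eq_crossStep_of_eq_crossStep hj hvu.2.1 (hvu.eq_crossStep hj (Ne.symm hv)),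
      add_one_or_sub_one_symm hvu.2.1⟩

lemma BH.adj_crossStep (hj : j ≠ ⟨0, hn⟩) {a : ZMod 4}
    (ha : a = u ⟨0, hn⟩ + 1 ∨ a = u ⟨0, hn⟩ - 1) : (BH n).Adj u (crossStep hn u j a) := by
  obtain ⟨h0, hjj, hother⟩ := (eq_crossStep_iff (u := u) hj a).1 rfl
  rw [← h0] at ha
  exact ⟨fun huv => ZMod4.ne_of_step ha (congrFun huv ⟨0, hn⟩).symm,
    Or.inl ⟨hn, ha, Or.inr ⟨j, hj, hjj, hother⟩⟩⟩

lemma BH.adj_and_ne_iff (hj : j ≠ ⟨0, hn⟩) :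
    (BH n).Adj u v ∧ v j ≠ u j ↔
      v = crossStep hn u j (u ⟨0, hn⟩ + 1) ∨ v = crossStep hn u j (u ⟨0, hn⟩ - 1) := by
  constructor
  · rintro ⟨h, hv⟩
    obtain ⟨hcross, hstep⟩ := BH.eq_crossStep_of_adj h hj hv
    rcases hstep with h0 | h0 <;> rw [h0] at hcross
    exacts [Or.inl hcross, Or.inr hcross]
  · rintro (rfl | rfl)
    all_goals exact ⟨BH.adj_crossStep hj (by simp), by
      rw [crossStep_apply_self]; exact add_bhSign_ne _ _⟩

lemma BH.ncard_adj_and_ne (hj : j ≠ ⟨0, hn⟩) :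
    {v | (BH n).Adj u v ∧ v j ≠ u j}.ncard = 2 := by
  have hset : {v | (BH n).Adj u v ∧ v j ≠ u j} =
      {crossStep hn u j (u ⟨0, hn⟩ + 1), crossStep hn u j (u ⟨0, hn⟩ - 1)} := by
    ext v; exact BH.adj_and_ne_iff hj
  rw [hset, Set.ncard_pair]
  intro h
  have := congrFun h ⟨0, hn⟩
  rw [crossStep_apply_inner hj, crossStep_apply_inner hj] at this
  exact ZMod4.add_one_ne_sub_one _ this

end crossStep

/-- every vertex of the subcube `BH_(n-1)^i` of `BH n` (vertices whose
`(n-1)`-th coordinate equals `i`) has exactly two neighbors outside the subcube; if its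
inner index is even both lie in `BH_(n-1)^(i+1)`, and if its inner index is odd both lie
in `BH_(n-1)^(i-1)` (indices mod 4). -/
theorem bh_crossing_neighbors (n : ℕ) (hn : 2 ≤ n) (i : ZMod 4)
    (u : Fin n → ZMod 4) (hu : u ⟨n - 1, by omega⟩ = i) :
    Nat.card {v : Fin n → ZMod 4 // (BH n).Adj u v ∧ v ⟨n - 1, by omega⟩ ≠ i} = 2 ∧
    ∀ v : Fin n → ZMod 4, (BH n).Adj u v → v ⟨n - 1, by omega⟩ ≠ i →
      (((u ⟨0, by omega⟩).val % 2 = 0 → v ⟨n - 1, by omega⟩ = i + 1) ∧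
       ((u ⟨0, by omega⟩).val % 2 = 1 → v ⟨n - 1, by omega⟩ = i - 1)) := by
  obtain ⟨h0, hl⟩ : 0 < n ∧ n - 1 < n := by omega
  have hj : (⟨n - 1, hl⟩ : Fin n) ≠ ⟨0, h0⟩ := by
    rw [ne_eq, Fin.mk.injEq]; omega
  subst hu
  refine ⟨(Nat.card_coe_set_eq _).trans (BH.ncard_adj_and_ne hj), fun v hadj hv => ?_⟩
  have hvj : v ⟨n - 1, hl⟩ = u ⟨n - 1, hl⟩ + bhSign (u ⟨0, h0⟩) := by
    rw [(BH.eq_crossStep_of_adj hadj hj hv).1, crossStep_apply_self]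
  exact ⟨fun h => by rw [hvj, bhSign_of_even h],
    fun h => by rw [hvj, bhSign_of_odd h, sub_eq_add_neg]⟩
end

section
/- In any graph G, if two vertices u and u' have the same neighborhood N of size 2n, and P_1, ..., P_k are vertex-disjoint paths covering all vertices of G with all endpoints outside {u, u'}, and at least 2n-1 vertices of N are endpoints of the paths, then k cannot exist covering both u and u' (i.e., if every vertex of N except at most one is a path endpoint, then u and u' cannot both be internal vertices of the paths). -/
/-! The common neighbourhood of `u` and `u'` contains exactly one vertex `x` that is not a sink.
An internal vertex of a path has two distinct neighbours along it (in `p.toSubgraph`), and a sink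
lying on the path `P j` can only be its end `t j`; so both `u` and `u'` are path-adjacent to `x`
and to the sink of their path. Since `x` lies on only one path, `u` and `u'` share a path, whose
end `t j` would then have two neighbours along it. -/

namespace SimpleGraph.Walk

variable {V : Type*} {G : SimpleGraph V} {a b : V}

theorem IsPath.ncard_neighborSet_toSubgraph_of_ne {p : G.Walk a b} (hp : p.IsPath) {y : V}
    (hy : y ∈ p.support) (hya : y ≠ a) (hyb : y ≠ b) :
    (p.toSubgraph.neighborSet y).ncard = 2 := by
  obtain ⟨i, rfl, hi⟩ := mem_support_iff_exists_getVert.mp hy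
  refine hp.ncard_neighborSet_toSubgraph_internal_eq_two (fun h => hya ?_) ?_
  · rw [h, getVert_zero]
  · refine lt_of_le_of_ne hi fun h => hyb ?_
    rw [h, getVert_length]

theorem IsPath.toSubgraph_adj_of_neighborSet_subset_pair {p : G.Walk a b} (hp : p.IsPath)
    {x y z : V} (hy : y ∈ p.support) (hya : y ≠ a) (hyb : y ≠ b)
    (hsub : p.toSubgraph.neighborSet y ⊆ {x, z}) :
    p.toSubgraph.Adj y x ∧ p.toSubgraph.Adj y z := by
  have hcard := hp.ncard_neighborSet_toSubgraph_of_ne hy hya hyb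
  have hpair : ({x, z} : Set V).ncard ≤ 2 := (Set.ncard_insert_le x {z}).trans (by simp)
  have heq : p.toSubgraph.neighborSet y = {x, z} :=
    Set.eq_of_subset_of_ncard_le hsub (hcard ▸ hpair)
  simp only [← Subgraph.mem_neighborSet, heq, Set.mem_insert_iff, Set.mem_singleton_iff,
    true_or, or_true, and_self]

theorem IsPath.eq_of_toSubgraph_adj_end {p : G.Walk a b} (hp : p.IsPath) {x y : V}
    (hx : p.toSubgraph.Adj b x) (hy : p.toSubgraph.Adj b y) : x = y := by
  have hend := hp.neighborSet_toSubgraph_endpoint (p.not_nil_of_adj_toSubgraph hx)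
  have hx' : x ∈ p.toSubgraph.neighborSet b := hx
  have hy' : y ∈ p.toSubgraph.neighborSet b := hy
  rw [hend] at hx' hy'
  exact hx'.trans hy'.symm

end SimpleGraph.Walk

open SimpleGraph

theorem eq_end_of_mem_support_of_mem_range {V ι : Type*} {G : SimpleGraph V} {s t : ι → V}
    {P : ∀ i, G.Walk (s i) (t i)}
    (hdisj : ∀ i j, i ≠ j → ∀ v, v ∈ (P i).support → v ∉ (P j).support) {j : ι} {w : V}
    (hw : w ∈ (P j).support) (hwt : w ∈ Set.range t) : w = t j := by
  obtain ⟨k, rfl⟩ := hwt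
  by_cases hkj : k = j
  · rw [hkj]
  · exact absurd hw (hdisj k j hkj _ (P k).end_mem_support)

theorem toSubgraph_adj_of_neighborSet_sdiff_range_subset {V ι : Type*} {G : SimpleGraph V}
    {s t : ι → V} {P : ∀ i, G.Walk (s i) (t i)}
    (hdisj : ∀ i j, i ≠ j → ∀ v, v ∈ (P i).support → v ∉ (P j).support) {j : ι}
    (hp : (P j).IsPath) {x y : V} (hy : y ∈ (P j).support) (hys : y ≠ s j) (hyt : y ≠ t j)
    (hN : G.neighborSet y \ Set.range t ⊆ {x}) :
    (P j).toSubgraph.Adj y x ∧ (P j).toSubgraph.Adj y (t j) := by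
  refine hp.toSubgraph_adj_of_neighborSet_subset_pair hy hys hyt fun w hw => ?_
  by_cases hwt : w ∈ Set.range t
  · exact Or.inr (eq_end_of_mem_support_of_mem_range hdisj
      (Walk.mem_support_of_adj_toSubgraph hw.symm) hwt)
  · exact Or.inl (hN ⟨hw.adj_sub, hwt⟩)

/-- in any graph `G`, if `u ≠ u'` have the same neighborhood `N` of size
`2n`, `T` is a set of `2n-1` common neighbors of `u` and `u'` (the sinks), and
`u, u' ∉ S ∪ T`, then no family of `2n-1` vertex-disjoint paths from the sources `S` to
the sinks `T` can cover both `u` and `u'`. -/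
theorem same_neighborhood_dpc_obstruction {V : Type*} (G : SimpleGraph V)
    (u u' : V) (hne : u ≠ u') (hN : G.neighborSet u = G.neighborSet u')
    (n : ℕ) (hNcard : Nat.card (G.neighborSet u) = 2 * n)
    (S T : Finset V) (hT : T.card = 2 * n - 1) (hTN : ↑T ⊆ G.neighborSet u)
    (huST : u ∉ S ∧ u ∉ T) (hu'ST : u' ∉ S ∧ u' ∉ T)
    (s t : Fin (2 * n - 1) → V) (P : ∀ i, G.Walk (s i) (t i))
    (hpath : ∀ i, (P i).IsPath)
    (hsS : Set.range s = ↑S) (htT : Set.range t = ↑T)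
    (hdisj : ∀ i j, i ≠ j → ∀ v, v ∈ (P i).support → v ∉ (P j).support)
    (hu : ∃ i, u ∈ (P i).support) (hu' : ∃ i, u' ∈ (P i).support) :
    False := by
  obtain ⟨i, hui⟩ := hu
  obtain ⟨i', hui'⟩ := hu'
  obtain ⟨x, hx⟩ : ∃ x, G.neighborSet u \ Set.range t = {x} := by
    refine Set.ncard_eq_one.mp ?_
    rw [htT, Set.ncard_sdiff hTN, Set.ncard_coe_finset, ← Nat.card_coe_set_eq, hNcard, hT]
    have := i.pos
    omega
  have ne_source : ∀ y ∉ S, ∀ j, y ≠ s j := fun y hy j h =>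
    hy (Finset.mem_coe.mp (hsS ▸ h ▸ Set.mem_range_self j))
  have ne_sink : ∀ y ∉ T, ∀ j, y ≠ t j := fun y hy j h =>
    hy (Finset.mem_coe.mp (htT ▸ h ▸ Set.mem_range_self j))
  obtain ⟨hux, hut⟩ := toSubgraph_adj_of_neighborSet_sdiff_range_subset hdisj (hpath i) hui
    (ne_source u huST.1 i) (ne_sink u huST.2 i) hx.subset
  obtain ⟨hu'x, hu't⟩ := toSubgraph_adj_of_neighborSet_sdiff_range_subset hdisj (hpath i') hui'
    (ne_source u' hu'ST.1 i') (ne_sink u' hu'ST.2 i') (hN ▸ hx.subset)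
  obtain rfl : i = i' := by
    by_contra h
    exact hdisj i i' h x (Walk.mem_support_of_adj_toSubgraph hux.symm)
      (Walk.mem_support_of_adj_toSubgraph hu'x.symm)
  exact hne ((hpath i).eq_of_toSubgraph_adj_end hut.symm hu't.symm)
end
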